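/- arXiv:1903.08436 — 4 statements merged into one kernel-verified Lean document; each statement's English description precedes it below -/
import Mathlib

section
/- Let M be a countable coarse group satisfying the negative-expression axiom and such that the product of full filters is associative. Then for every full filter x and every C ∈ M, the set x·Ĉ = {x·y : y ∈ Ĉ} equals the set D̂ where D = x·C is given by the action (i.e. SC ⊑ D for some S ∈ x). -/
/-! Abstract coarse groups (Nies–Schlicht–Tent). -/

namespace CoarsePaper

/-- A structure with one ternary relation `rel A B C`, read "AB ⊑ C". -/
structure CG (M : Type) : Type where
  rel : M → M → M → Prop

variable {M : Type}

/-- `U` is a *subgroup: `UU ⊑ U`. -/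
def IsSub (c : CG M) (U : M) : Prop := c.rel U U U

/-- For *subgroups, `U ⊑ V` means `UV ⊑ V`. -/
def sle (c : CG M) (U V : M) : Prop := c.rel U V V

/-- `A ∈ LC(U)`: `U` is the ⊑-maximum *subgroup with `AU ⊑ A`. -/
def LC (c : CG M) (U A : M) : Prop :=
  IsSub c U ∧ c.rel A U A ∧ ∀ V, IsSub c V → c.rel A V A → sle c V U

/-- `A ∈ RC(U)`: `U` is the ⊑-maximum *subgroup with `UA ⊑ A`. -/
def RC (c : CG M) (U A : M) : Prop :=
  IsSub c U ∧ c.rel U A A ∧ ∀ V, IsSub c V → c.rel V A A → sle c V U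

/-- `A ⊑ B` for arbitrary elements: `AU ⊑ B` for some *subgroup `U` with `A ∈ LC(U)`. -/
def cle (c : CG M) (A B : M) : Prop := ∃ U, LC c U A ∧ c.rel A U B

/-- `A`, `B` are disjoint: there are no `C`, `D` with `CD ⊑ A` and `CD ⊑ B`. -/
def Disj (c : CG M) (A B : M) : Prop := ¬ ∃ C D, c.rel C D A ∧ c.rel C D B

/-- `S(A,B)`: there is a *subgroup `V` with `A ∈ RC(V)`, `B ∈ LC(V)`, `AB ⊑ V`;
we then write `B = A⋄`. -/
def Srel (c : CG M) (A B : M) : Prop :=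
  ∃ V, RC c V A ∧ LC c V B ∧ c.rel A B V

/-- The axioms of a coarse group. -/
structure Axioms (c : CG M) : Prop where
  -- (0a) ⊑ is a partial order on *subgroups in which any two elements have a meet
  sle_refl : ∀ U, IsSub c U → sle c U U
  sle_antisymm : ∀ U V, IsSub c U → IsSub c V → sle c U V → sle c V U → U = V
  sle_trans : ∀ U V W, IsSub c U → IsSub c V → IsSub c W → sle c U V → sle c V W → sle c U W
  meet : ∀ U V, IsSub c U → IsSub c V → ∃ W, IsSub c W ∧ sle c W U ∧ sle c W V ∧
    ∀ T, IsSub c T → sle c T U → sle c T V → sle c T W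
  -- (0b) every element is a left *coset and a right *coset of some *subgroup
  exists_lc : ∀ A, ∃ U, LC c U A
  exists_rc : ∀ A, ∃ U, RC c U A
  -- (0c) ⊑ is a partial order on M extending ⊑ on *subgroups
  cle_refl : ∀ A, cle c A A
  cle_antisymm : ∀ A B, cle c A B → cle c B A → A = B
  cle_trans : ∀ A B C, cle c A B → cle c B C → cle c A C
  cle_ext : ∀ U V, IsSub c U → IsSub c V → (cle c U V ↔ sle c U V)
  -- (1)
  lc_up : ∀ U' U A', IsSub c U' → IsSub c U → sle c U' U → LC c U' A' →
    ∃ A, LC c U A ∧ cle c A' A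
  lc_disj : ∀ U' U A' A, IsSub c U' → IsSub c U → sle c U' U → LC c U' A' → LC c U A →
    cle c A' A ∨ Disj c A' A
  rc_up : ∀ U' U A', IsSub c U' → IsSub c U → sle c U' U → RC c U' A' →
    ∃ A, RC c U A ∧ cle c A' A
  rc_disj : ∀ U' U A' A, IsSub c U' → IsSub c U → sle c U' U → RC c U' A' → RC c U A →
    cle c A' A ∨ Disj c A' A
  -- (2) monotonicity
  mono : ∀ A₀ A₁ B₀ B₁ C, c.rel B₀ B₁ C → cle c A₀ B₀ → cle c A₁ B₁ → c.rel A₀ A₁ C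
  -- (3)
  lc_sub_iff : ∀ U V B, IsSub c U → IsSub c V → LC c V B →
    (sle c U V ↔ ∃ A, LC c U A ∧ cle c A B)
  rc_sub_iff : ∀ U V B, IsSub c U → IsSub c V → RC c V B →
    (sle c U V ↔ ∃ A, RC c U A ∧ cle c A B)
  -- (4) inverses
  srel_existsUnique : ∀ A, ∃! B, Srel c A B
  srel_symm : ∀ A B, Srel c A B → Srel c B A
  srel_orderIso : ∀ A B A' B', Srel c A A' → Srel c B B' → (cle c A B ↔ cle c A' B')
  -- (5) products of compatible *cosets
  prod_exists : ∀ U V W A B, RC c U A → LC c V A → RC c V B → LC c W B →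
    ∃ C, RC c U C ∧ LC c W C ∧ c.rel A B C ∧ ∀ D, c.rel A B D → cle c C D

/-- A full filter on `M`. -/
structure FullFilter (c : CG M) (x : Set M) : Prop where
  up : ∀ A ∈ x, ∀ B, cle c A B → B ∈ x
  directed : ∀ A ∈ x, ∀ B ∈ x, ∃ C ∈ x, cle c C A ∧ cle c C B
  lc_mem : ∀ U, IsSub c U → ∃ A ∈ x, LC c U A
  rc_mem : ∀ U, IsSub c U → ∃ A ∈ x, RC c U A

/-- The product of two filters: `x·y = {C : ∃ A ∈ x, B ∈ y, AB ⊑ C}`. -/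
def fprod (c : CG M) (x y : Set M) : Set M :=
  {C | ∃ A ∈ x, ∃ B ∈ y, c.rel A B C}

/-- The inverse of a filter: `x⁻¹ = {A⋄ : A ∈ x}`. -/
def finv (c : CG M) (x : Set M) : Set M :=
  {B | ∃ A ∈ x, Srel c A B}

/-- The identity filter: generated by the *subgroups. -/
def fone (c : CG M) : Set M := {C | ∃ U, IsSub c U ∧ cle c U C}

/-- The space `F(M)` of full filters on `M`. -/
abbrev FF (c : CG M) : Type := {x : Set M // FullFilter c x}

/-- The topology on `F(M)` generated by the sets `Â = {x : A ∈ x}`. -/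
def ffTop (c : CG M) : TopologicalSpace (FF c) :=
  TopologicalSpace.generateFrom {S | ∃ A : M, S = {x : FF c | A ∈ x.1}}

/-- `Â`, as a collection of subsets of `M`: the full filters containing `A`. -/
def hatS (c : CG M) (A : M) : Set (Set M) := {x | FullFilter c x ∧ A ∈ x}

/-- Associativity of the product of full filters. -/
def FAssoc (c : CG M) : Prop :=
  ∀ x y z : Set M, FullFilter c x → FullFilter c y → FullFilter c z →
    fprod c (fprod c x y) z = fprod c x (fprod c y z)

/-- The negative-expression axiom. -/
structure NegAx (c : CG M) : Prop where
  rel_iff : ∀ A B C, c.rel A B C ↔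
    ¬ ∃ D E F, cle c D A ∧ cle c E B ∧ c.rel D E F ∧ Disj c C F
  le_iff : ∀ A B, cle c A B ↔ ¬ ∃ C, cle c C A ∧ Disj c B C

/-- The action of a filter on a *coset: `x·A = B` iff `SA ⊑ B` for some `S ∈ x`. -/
def act (c : CG M) (x : Set M) (A B : M) : Prop := ∃ S ∈ x, c.rel S A B

/-- `𝒱 ⊆ F(M)` is a subgroup of the filter group `F(M)`. -/
def IsSubgroupFF (c : CG M) (V : Set (FF c)) : Prop :=
  (∀ z : FF c, z.1 = fone c → z ∈ V) ∧
  (∀ u ∈ V, ∀ v ∈ V, ∀ w : FF c, w.1 = fprod c u.1 v.1 → w ∈ V) ∧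
  (∀ u ∈ V, ∀ w : FF c, w.1 = finv c u.1 → w ∈ V)

/-- The union of double cosets `⋃_{i<n} V̂·Â_i`, as a collection of subsets of `M`
(the underlying sets of the full filters belonging to it). -/
def doubleUnion (c : CG M) (V : M) {n : ℕ} (A : Fin n → M) : Set (Set M) :=
  {z | ∃ i : Fin n, ∃ u v : Set M, FullFilter c u ∧ FullFilter c v ∧ V ∈ u ∧ A i ∈ v ∧
    z = fprod c u v}

/-- The coset-recognition axiom. -/
def CosetRec (c : CG M) : Prop :=
  ∀ V, IsSub c V → ∀ n : ℕ, 1 ≤ n → ∀ A : Fin n → M, (∀ i, LC c V (A i)) →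
    (fone c ∈ doubleUnion c V A ∧
     (∀ p ∈ doubleUnion c V A, ∀ q ∈ doubleUnion c V A, fprod c p q ∈ doubleUnion c V A) ∧
     (∀ p ∈ doubleUnion c V A, finv c p ∈ doubleUnion c V A)) →
    ∃ U, IsSub c U ∧ (∀ i, c.rel V (A i) U) ∧
      ∀ z : Set M, FullFilter c z → U ∈ z → z ∈ doubleUnion c V A

/-- Roelcke precompactness of the filter group `F(M)`: every open neighbourhood `𝒰` of the
identity satisfies `F(M) = 𝒰·F·𝒰` for some finite `F`. -/
def RoelckeFF (c : CG M) : Prop :=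
  ∀ U : Set (FF c), @IsOpen (FF c) (ffTop c) U → (∀ z : FF c, z.1 = fone c → z ∈ U) →
    ∃ F : Set (FF c), F.Finite ∧
      ∀ z : FF c, ∃ u ∈ U, ∃ f ∈ F, ∃ v ∈ U, z.1 = fprod c (fprod c u.1 f.1) v.1


section Aux

variable {c : CG M}

lemma lc_unique (ax : Axioms c) {U U' A : M} (h : LC c U A) (h' : LC c U' A) : U = U' :=
  ax.sle_antisymm U U' h.1 h'.1 (h'.2.2 U h.1 h.2.1) (h.2.2 U' h'.1 h'.2.1)

lemma rc_unique (ax : Axioms c) {U U' A : M} (h : RC c U A) (h' : RC c U' A) : U = U' :=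
  ax.sle_antisymm U U' h.1 h'.1 (h'.2.2 U h.1 h.2.1) (h.2.2 U' h'.1 h'.2.1)

lemma lb_not_disj (ax : Axioms c) {G A B : M} (hGA : cle c G A) (hGB : cle c G B) :
    ¬ Disj c A B := by
  obtain ⟨U₁, hU₁, hr₁⟩ := hGA
  obtain ⟨U₂, hU₂, hr₂⟩ := hGB
  cases lc_unique ax hU₁ hU₂
  exact fun h => h ⟨G, U₁, hr₁, hr₂⟩

lemma cle_of_sle (ax : Axioms c) {U V : M} (hU : IsSub c U) (hV : IsSub c V)
    (h : sle c U V) : cle c U V := (ax.cle_ext U V hU hV).mpr h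

lemma sle_of_cle (ax : Axioms c) {U V : M} (hU : IsSub c U) (hV : IsSub c V)
    (h : cle c U V) : sle c U V := (ax.cle_ext U V hU hV).mp h

lemma lcsub_mono (ax : Axioms c) {U U' A A' : M} (hA : LC c U A) (hA' : LC c U' A')
    (h : cle c A' A) : sle c U' U :=
  (ax.lc_sub_iff U' U A hA'.1 hA.1 hA).mpr ⟨A', hA', h⟩

lemma rcsub_mono (ax : Axioms c) {U U' A A' : M} (hA : RC c U A) (hA' : RC c U' A')
    (h : cle c A' A) : sle c U' U :=
  (ax.rc_sub_iff U' U A hA'.1 hA.1 hA).mpr ⟨A', hA', h⟩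

lemma shrink_pair (ax : Axioms c) (D E : M) :
    ∃ W D' E', IsSub c W ∧ LC c W D' ∧ RC c W E' ∧ cle c D' D ∧ cle c E' E := by
  obtain ⟨V, hV⟩ := ax.exists_lc D
  obtain ⟨U, hU⟩ := ax.exists_rc E
  obtain ⟨W, hW, hWV, hWU, -⟩ := ax.meet V U hV.1 hU.1
  obtain ⟨D', hD', hD'D⟩ := (ax.lc_sub_iff W V D hW hV.1 hV).mp hWV
  obtain ⟨E', hE', hE'E⟩ := (ax.rc_sub_iff W U E hW hU.1 hU).mp hWU
  exact ⟨W, D', E', hW, hD', hE', hD'D, hE'E⟩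

lemma prod_min (ax : Axioms c) {W D' E' : M} (hD' : LC c W D') (hE' : RC c W E') :
    ∃ P, c.rel D' E' P ∧ ∀ F, c.rel D' E' F → cle c P F := by
  obtain ⟨U₀, hU₀⟩ := ax.exists_rc D'
  obtain ⟨W₀, hW₀⟩ := ax.exists_lc E'
  obtain ⟨P, -, -, hrel, hmin⟩ := ax.prod_exists U₀ W W₀ D' E' hU₀ hD' hE' hW₀
  exact ⟨P, hrel, hmin⟩

lemma exists_lb_of_rel (ax : Axioms c) {D E C F : M} (h1 : c.rel D E C) (h2 : c.rel D E F) :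
    ∃ P, cle c P C ∧ cle c P F := by
  obtain ⟨W, D', E', hW, hD', hE', hDD, hEE⟩ := shrink_pair ax D E
  have hC' : c.rel D' E' C := ax.mono _ _ _ _ _ h1 hDD hEE
  have hF' : c.rel D' E' F := ax.mono _ _ _ _ _ h2 hDD hEE
  obtain ⟨P, hrel, hmin⟩ := prod_min ax hD' hE'
  exact ⟨P, hmin C hC', hmin F hF'⟩

lemma up3 (ax : Axioms c) (nax : NegAx c) {A B C C' : M} (h : c.rel A B C)
    (hCC' : cle c C C') : c.rel A B C' := by
  rw [nax.rel_iff]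
  rintro ⟨D, E, F, hDA, hEB, hDEF, hdisj⟩
  have hDEC : c.rel D E C := ax.mono _ _ _ _ _ h hDA hEB
  obtain ⟨P, hPC, hPF⟩ := exists_lb_of_rel ax hDEC hDEF
  exact lb_not_disj ax (ax.cle_trans _ _ _ hPC hCC') hPF hdisj

lemma sub_lc_self (ax : Axioms c) (nax : NegAx c) {V : M} (hV : IsSub c V) : LC c V V := by
  refine ⟨hV, hV, fun V'' hV'' hrel => ?_⟩
  refine sle_of_cle ax hV'' hV ?_
  rw [nax.le_iff]
  rintro ⟨P, hPV'', hdisj⟩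
  have h1 : c.rel V P V := ax.mono V P V V'' V hrel (ax.cle_refl V) hPV''
  obtain ⟨T, hT⟩ := ax.exists_rc P
  obtain ⟨T', hT'sub, hT'T, hT'V, -⟩ := ax.meet T V hT.1 hV
  have h2 : c.rel T' P P :=
    ax.mono _ _ _ _ _ hT.2.1 (cle_of_sle ax hT'sub hT.1 hT'T) (ax.cle_refl P)
  have h3 : c.rel T' P V :=
    ax.mono _ _ _ _ _ h1 (cle_of_sle ax hT'sub hV hT'V) (ax.cle_refl P)
  exact hdisj ⟨T', P, h3, h2⟩

lemma sub_rc_self (ax : Axioms c) (nax : NegAx c) {V : M} (hV : IsSub c V) : RC c V V := by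
  refine ⟨hV, hV, fun V'' hV'' hrel => ?_⟩
  refine sle_of_cle ax hV'' hV ?_
  rw [nax.le_iff]
  rintro ⟨P, hPV'', hdisj⟩
  have h1 : c.rel P V V := ax.mono P V V'' V V hrel hPV'' (ax.cle_refl V)
  obtain ⟨T, hT⟩ := ax.exists_lc P
  obtain ⟨T', hT'sub, hT'T, hT'V, -⟩ := ax.meet T V hT.1 hV
  have h2 : c.rel P T' P :=
    ax.mono _ _ _ _ _ hT.2.1 (ax.cle_refl P) (cle_of_sle ax hT'sub hT.1 hT'T)
  have h3 : c.rel P T' V :=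
    ax.mono _ _ _ _ _ h1 (ax.cle_refl P) (cle_of_sle ax hT'sub hV hT'V)
  exact hdisj ⟨P, T', h3, h2⟩

lemma lc_eq_of_lb (ax : Axioms c) {V A B G : M} (hA : LC c V A) (hB : LC c V B)
    (hGA : cle c G A) (hGB : cle c G B) : A = B := by
  have h1 := ax.lc_disj V V A B hA.1 hB.1 (ax.sle_refl V hA.1) hA hB
  have h2 := ax.lc_disj V V B A hB.1 hA.1 (ax.sle_refl V hA.1) hB hA
  exact ax.cle_antisymm A B (h1.resolve_right (lb_not_disj ax hGA hGB))
    (h2.resolve_right (lb_not_disj ax hGB hGA))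

lemma srel_rc_lc (ax : Axioms c) {A B V : M} (h : Srel c A B) (hV : RC c V A) :
    LC c V B := by
  obtain ⟨V', h1, h2, -⟩ := h
  cases rc_unique ax h1 hV
  exact h2

lemma srel_lc_rc (ax : Axioms c) {A B V : M} (h : Srel c A B) (hV : LC c V A) :
    RC c V B := by
  obtain ⟨V', h1, h2, -⟩ := ax.srel_symm A B h
  cases lc_unique ax h2 hV
  exact h1

lemma lc_refine (ax : Axioms c) {x : Set M} (hx : FullFilter c x) {A U : M}
    (hA : A ∈ x) (hU : LC c U A) {W : M} (hW : IsSub c W) (hWU : sle c W U) :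
    ∃ A', A' ∈ x ∧ LC c W A' ∧ cle c A' A := by
  obtain ⟨A'', hA''x, hA''⟩ := hx.lc_mem W hW
  obtain ⟨A₃, hA₃x, h31, h32⟩ := hx.directed A hA A'' hA''x
  obtain ⟨W₄, hW₄⟩ := ax.exists_lc A₃
  have hW₄W : sle c W₄ W := lcsub_mono ax hA'' hW₄ h32
  obtain ⟨A₄, hA₄, h34⟩ := ax.lc_up W₄ W A₃ hW₄.1 hW hW₄W hW₄
  have hA₄x : A₄ ∈ x := hx.up A₃ hA₃x A₄ h34
  have hd : cle c A₄ A ∨ Disj c A₄ A := ax.lc_disj W U A₄ A hW hU.1 hWU hA₄ hU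
  exact ⟨A₄, hA₄x, hA₄, hd.resolve_right (lb_not_disj ax h34 h31)⟩

lemma rc_refine (ax : Axioms c) {x : Set M} (hx : FullFilter c x) {A U : M}
    (hA : A ∈ x) (hU : RC c U A) {W : M} (hW : IsSub c W) (hWU : sle c W U) :
    ∃ A', A' ∈ x ∧ RC c W A' ∧ cle c A' A := by
  obtain ⟨A'', hA''x, hA''⟩ := hx.rc_mem W hW
  obtain ⟨A₃, hA₃x, h31, h32⟩ := hx.directed A hA A'' hA''x
  obtain ⟨W₄, hW₄⟩ := ax.exists_rc A₃
  have hW₄W : sle c W₄ W := rcsub_mono ax hA'' hW₄ h32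
  obtain ⟨A₄, hA₄, h34⟩ := ax.rc_up W₄ W A₃ hW₄.1 hW hW₄W hW₄
  have hA₄x : A₄ ∈ x := hx.up A₃ hA₃x A₄ h34
  have hd : cle c A₄ A ∨ Disj c A₄ A := ax.rc_disj W U A₄ A hW hU.1 hWU hA₄ hU
  exact ⟨A₄, hA₄x, hA₄, hd.resolve_right (lb_not_disj ax h34 h31)⟩

lemma prod_full (ax : Axioms c) (nax : NegAx c) {x y : Set M} (hx : FullFilter c x)
    (hy : FullFilter c y) : FullFilter c (fprod c x y) := by
  refine ⟨?_, ?_, ?_, ?_⟩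
  · rintro C ⟨A, hA, B, hB, hrel⟩ C' hCC'
    exact ⟨A, hA, B, hB, up3 ax nax hrel hCC'⟩
  · rintro C₁ ⟨A₁, hA₁, B₁, hB₁, h₁⟩ C₂ ⟨A₂, hA₂, B₂, hB₂, h₂⟩
    obtain ⟨A, hAx, hAA₁, hAA₂⟩ := hx.directed A₁ hA₁ A₂ hA₂
    obtain ⟨B, hBy, hBB₁, hBB₂⟩ := hy.directed B₁ hB₁ B₂ hB₂
    have r₁ : c.rel A B C₁ := ax.mono _ _ _ _ _ h₁ hAA₁ hBB₁
    have r₂ : c.rel A B C₂ := ax.mono _ _ _ _ _ h₂ hAA₂ hBB₂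
    obtain ⟨VA, hVA⟩ := ax.exists_lc A
    obtain ⟨UB, hUB⟩ := ax.exists_rc B
    obtain ⟨W, hW, hWV, hWU, -⟩ := ax.meet VA UB hVA.1 hUB.1
    obtain ⟨A', hA'x, hA'lc, hA'A⟩ := lc_refine ax hx hAx hVA hW hWV
    obtain ⟨B', hB'y, hB'rc, hB'B⟩ := rc_refine ax hy hBy hUB hW hWU
    have r₁' : c.rel A' B' C₁ := ax.mono _ _ _ _ _ r₁ hA'A hB'B
    have r₂' : c.rel A' B' C₂ := ax.mono _ _ _ _ _ r₂ hA'A hB'B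
    obtain ⟨P, hrelP, hmin⟩ := prod_min ax hA'lc hB'rc
    exact ⟨P, ⟨A', hA'x, B', hB'y, hrelP⟩, hmin _ r₁', hmin _ r₂'⟩
  · intro U hU
    obtain ⟨B, hBy, hB⟩ := hy.lc_mem U hU
    obtain ⟨A, hAx, -⟩ := hx.lc_mem U hU
    obtain ⟨UB, hUB⟩ := ax.exists_rc B
    obtain ⟨VA, hVA⟩ := ax.exists_lc A
    obtain ⟨W, hW, hWV, hWU, -⟩ := ax.meet VA UB hVA.1 hUB.1
    obtain ⟨A', hA'x, hA'lc, hA'A⟩ := lc_refine ax hx hAx hVA hW hWV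
    obtain ⟨B', hB'y, hB'rc, hB'B⟩ := rc_refine ax hy hBy hUB hW hWU
    obtain ⟨α, hα⟩ := ax.exists_rc A'
    obtain ⟨β, hβ⟩ := ax.exists_lc B'
    obtain ⟨C₀, -, hC₀lc, hC₀rel, -⟩ := ax.prod_exists α W β A' B' hα hA'lc hB'rc hβ
    have hβU : sle c β U := lcsub_mono ax hB hβ hB'B
    obtain ⟨C', hC', hC₀C'⟩ := ax.lc_up β U C₀ hβ.1 hU hβU hC₀lc
    exact ⟨C', ⟨A', hA'x, B', hB'y, up3 ax nax hC₀rel hC₀C'⟩, hC'⟩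
  · intro U hU
    obtain ⟨A, hAx, hA⟩ := hx.rc_mem U hU
    obtain ⟨B, hBy, -⟩ := hy.rc_mem U hU
    obtain ⟨VA, hVA⟩ := ax.exists_lc A
    obtain ⟨UB, hUB⟩ := ax.exists_rc B
    obtain ⟨W, hW, hWV, hWU, -⟩ := ax.meet VA UB hVA.1 hUB.1
    obtain ⟨A', hA'x, hA'lc, hA'A⟩ := lc_refine ax hx hAx hVA hW hWV
    obtain ⟨B', hB'y, hB'rc, hB'B⟩ := rc_refine ax hy hBy hUB hW hWU
    obtain ⟨α, hα⟩ := ax.exists_rc A'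
    obtain ⟨β, hβ⟩ := ax.exists_lc B'
    obtain ⟨C₀, hC₀rc, -, hC₀rel, -⟩ := ax.prod_exists α W β A' B' hα hA'lc hB'rc hβ
    have hαU : sle c α U := rcsub_mono ax hA hα hA'A
    obtain ⟨C', hC', hC₀C'⟩ := ax.rc_up α U C₀ hα.1 hU hαU hC₀rc
    exact ⟨C', ⟨A', hA'x, B', hB'y, up3 ax nax hC₀rel hC₀C'⟩, hC'⟩

lemma finv_full (ax : Axioms c) {x : Set M} (hx : FullFilter c x) :
    FullFilter c (finv c x) := by
  refine ⟨?_, ?_, ?_, ?_⟩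
  · rintro B ⟨A, hAx, hS⟩ B' hBB'
    obtain ⟨A', hS'⟩ := (ax.srel_existsUnique B').exists
    have hAA' : cle c A A' :=
      (ax.srel_orderIso B B' A A' (ax.srel_symm A B hS) hS').mp hBB'
    exact ⟨A', hx.up A hAx A' hAA', ax.srel_symm B' A' hS'⟩
  · rintro B₁ ⟨A₁, h₁, hS₁⟩ B₂ ⟨A₂, h₂, hS₂⟩
    obtain ⟨A, hAx, g₁, g₂⟩ := hx.directed A₁ h₁ A₂ h₂
    obtain ⟨B, hSAB⟩ := (ax.srel_existsUnique A).exists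
    exact ⟨B, ⟨A, hAx, hSAB⟩, (ax.srel_orderIso A A₁ B B₁ hSAB hS₁).mp g₁,
      (ax.srel_orderIso A A₂ B B₂ hSAB hS₂).mp g₂⟩
  · intro U hU
    obtain ⟨A, hAx, hArc⟩ := hx.rc_mem U hU
    obtain ⟨B, hS⟩ := (ax.srel_existsUnique A).exists
    exact ⟨B, ⟨A, hAx, hS⟩, srel_rc_lc ax hS hArc⟩
  · intro U hU
    obtain ⟨A, hAx, hAlc⟩ := hx.lc_mem U hU
    obtain ⟨B, hS⟩ := (ax.srel_existsUnique A).exists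
    exact ⟨B, ⟨A, hAx, hS⟩, srel_lc_rc ax hS hAlc⟩

lemma fone_full (ax : Axioms c) (nax : NegAx c) : FullFilter c (fone c) := by
  refine ⟨?_, ?_, ?_, ?_⟩
  · rintro C ⟨U, hU, hUC⟩ C' hCC'
    exact ⟨U, hU, ax.cle_trans _ _ _ hUC hCC'⟩
  · rintro C₁ ⟨U₁, hU₁, h₁⟩ C₂ ⟨U₂, hU₂, h₂⟩
    obtain ⟨W, hW, hWU₁, hWU₂, -⟩ := ax.meet U₁ U₂ hU₁ hU₂
    exact ⟨W, ⟨W, hW, ax.cle_refl W⟩,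
      ax.cle_trans _ _ _ (cle_of_sle ax hW hU₁ hWU₁) h₁,
      ax.cle_trans _ _ _ (cle_of_sle ax hW hU₂ hWU₂) h₂⟩
  · intro U hU
    exact ⟨U, ⟨U, hU, ax.cle_refl U⟩, sub_lc_self ax nax hU⟩
  · intro U hU
    exact ⟨U, ⟨U, hU, ax.cle_refl U⟩, sub_rc_self ax nax hU⟩

lemma fone_prod (ax : Axioms c) (nax : NegAx c) {z : Set M} (hz : FullFilter c z) :
    fprod c (fone c) z = z := by
  ext C
  constructor
  · rintro ⟨A, ⟨U, hU, hUA⟩, B, hBz, hrel⟩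
    have h1 : c.rel U B C := ax.mono U B A B C hrel hUA (ax.cle_refl B)
    have hBC : cle c B C := by
      rw [nax.le_iff]
      rintro ⟨P, hPB, hdisj⟩
      obtain ⟨T, hT⟩ := ax.exists_rc P
      obtain ⟨T', hT'sub, hT'T, hT'U, -⟩ := ax.meet T U hT.1 hU
      have h2 : c.rel T' P P :=
        ax.mono _ _ _ _ _ hT.2.1 (cle_of_sle ax hT'sub hT.1 hT'T) (ax.cle_refl P)
      have h3 : c.rel T' P C :=
        ax.mono _ _ _ _ _ h1 (cle_of_sle ax hT'sub hU hT'U) hPB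
      exact hdisj ⟨T', P, h3, h2⟩
    exact hz.up B hBz C hBC
  · intro hC
    obtain ⟨U, hU⟩ := ax.exists_rc C
    exact ⟨U, ⟨U, hU.1, ax.cle_refl U⟩, C, hC, hU.2.1⟩

lemma prod_finv_right (ax : Axioms c) (nax : NegAx c) {x : Set M} (hx : FullFilter c x) :
    fprod c x (finv c x) = fone c := by
  ext C
  constructor
  · rintro ⟨A, hAx, B, ⟨A', hA'x, hS⟩, hrel⟩
    obtain ⟨A'', hA''x, g1, g2⟩ := hx.directed A hAx A' hA'x
    obtain ⟨B'', hS''⟩ := (ax.srel_existsUnique A'').exists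
    have hB''B : cle c B'' B := (ax.srel_orderIso A'' A' B'' B hS'' hS).mp g2
    have hrel'' : c.rel A'' B'' C := ax.mono _ _ _ _ _ hrel g1 hB''B
    obtain ⟨V, hVA'', hVB'', hrelV⟩ := hS''
    obtain ⟨V₂, hV₂⟩ := ax.exists_lc A''
    have hV₂B'' : RC c V₂ B'' := srel_lc_rc ax ⟨V, hVA'', hVB'', hrelV⟩ hV₂
    obtain ⟨C₀, hC₀rc, hC₀lc, hC₀rel, hC₀min⟩ :=
      ax.prod_exists V V₂ V A'' B'' hVA'' hV₂ hV₂B'' hVB''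
    have h5 : cle c C₀ V := hC₀min V hrelV
    have h6 : cle c C₀ C := hC₀min C hrel''
    have hVsub : IsSub c V := hVA''.1
    obtain ⟨A₀, hA₀, hA₀C₀⟩ :=
      (ax.lc_sub_iff V V C₀ hVsub hVsub hC₀lc).mp (ax.sle_refl V hVsub)
    have hA₀V : cle c A₀ V := ax.cle_trans _ _ _ hA₀C₀ h5
    have hVA₀ : cle c V A₀ :=
      (ax.lc_disj V V V A₀ hVsub hVsub (ax.sle_refl V hVsub)
        (sub_lc_self ax nax hVsub) hA₀).resolve_right
        (lb_not_disj ax hA₀V (ax.cle_refl A₀))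
    exact ⟨V, hVsub, ax.cle_trans _ _ _ (ax.cle_trans _ _ _ hVA₀ hA₀C₀) h6⟩
  · rintro ⟨U, hU, hUC⟩
    obtain ⟨A, hAx, hArc⟩ := hx.rc_mem U hU
    obtain ⟨B, hS⟩ := (ax.srel_existsUnique A).exists
    have hrel : c.rel A B C := by
      obtain ⟨V, h1, h2, h3⟩ := hS
      cases rc_unique ax h1 hArc
      exact up3 ax nax h3 hUC
    exact ⟨A, hAx, B, ⟨A, hAx, hS⟩, hrel⟩

lemma prod_finv_left (ax : Axioms c) (nax : NegAx c) {x : Set M} (hx : FullFilter c x) :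
    fprod c (finv c x) x = fone c := by
  ext C
  constructor
  · rintro ⟨B, ⟨A', hA'x, hS⟩, A, hAx, hrel⟩
    obtain ⟨A'', hA''x, g1, g2⟩ := hx.directed A' hA'x A hAx
    obtain ⟨B'', hS''⟩ := (ax.srel_existsUnique A'').exists
    have hB''B : cle c B'' B := (ax.srel_orderIso A'' A' B'' B hS'' hS).mp g1
    have hrel'' : c.rel B'' A'' C := ax.mono _ _ _ _ _ hrel hB''B g2
    have hS3 : Srel c B'' A'' := ax.srel_symm A'' B'' hS''
    obtain ⟨V', hRCV'B'', hLCV'A'', hrelV'⟩ := hS3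
    obtain ⟨V₂, hV₂⟩ := ax.exists_lc B''
    have hRCV₂A'' : RC c V₂ A'' := srel_lc_rc ax ⟨V', hRCV'B'', hLCV'A'', hrelV'⟩ hV₂
    obtain ⟨C₀, hC₀rc, hC₀lc, hC₀rel, hC₀min⟩ :=
      ax.prod_exists V' V₂ V' B'' A'' hRCV'B'' hV₂ hRCV₂A'' hLCV'A''
    have h5 : cle c C₀ V' := hC₀min V' hrelV'
    have h6 : cle c C₀ C := hC₀min C hrel''
    have hVsub : IsSub c V' := hRCV'B''.1
    obtain ⟨A₀, hA₀, hA₀C₀⟩ :=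
      (ax.lc_sub_iff V' V' C₀ hVsub hVsub hC₀lc).mp (ax.sle_refl V' hVsub)
    have hA₀V : cle c A₀ V' := ax.cle_trans _ _ _ hA₀C₀ h5
    have hVA₀ : cle c V' A₀ :=
      (ax.lc_disj V' V' V' A₀ hVsub hVsub (ax.sle_refl V' hVsub)
        (sub_lc_self ax nax hVsub) hA₀).resolve_right
        (lb_not_disj ax hA₀V (ax.cle_refl A₀))
    exact ⟨V', hVsub, ax.cle_trans _ _ _ (ax.cle_trans _ _ _ hVA₀ hA₀C₀) h6⟩
  · rintro ⟨U, hU, hUC⟩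
    obtain ⟨A, hAx, hAlc⟩ := hx.lc_mem U hU
    obtain ⟨B, hS⟩ := (ax.srel_existsUnique A).exists
    have hrel : c.rel B A C := by
      obtain ⟨V, h1, h2, h3⟩ := ax.srel_symm A B hS
      cases lc_unique ax h2 hAlc
      exact up3 ax nax h3 hUC
    exact ⟨B, ⟨A, hAx, hS⟩, A, hAx, hrel⟩

lemma exists_ff (ax : Axioms c) [Countable M] (A : M) :
    ∃ x, FullFilter c x ∧ A ∈ x := by
  have hne : Nonempty M := ⟨A⟩
  obtain ⟨e, he⟩ := exists_surjective_nat M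
  have step : ∀ B U, ∃ B', cle c B' B ∧ (IsSub c U →
      ∃ W Z, IsSub c W ∧ IsSub c Z ∧ LC c W B' ∧ RC c Z B' ∧ sle c W U ∧ sle c Z U) := by
    intro B U
    by_cases hU : IsSub c U
    · obtain ⟨VB, hVB⟩ := ax.exists_lc B
      obtain ⟨W', hW', hW'V, hW'U, -⟩ := ax.meet VB U hVB.1 hU
      obtain ⟨B₁, hB₁, hB₁B⟩ := (ax.lc_sub_iff W' VB B hW' hVB.1 hVB).mp hW'V
      obtain ⟨Z₁, hZ₁⟩ := ax.exists_rc B₁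
      obtain ⟨Z, hZ, hZZ₁, hZU, -⟩ := ax.meet Z₁ U hZ₁.1 hU
      obtain ⟨B', hB', hB'B₁⟩ := (ax.rc_sub_iff Z Z₁ B₁ hZ hZ₁.1 hZ₁).mp hZZ₁
      obtain ⟨W, hWlc⟩ := ax.exists_lc B'
      have hWW' : sle c W W' := lcsub_mono ax hB₁ hWlc hB'B₁
      exact ⟨B', ax.cle_trans _ _ _ hB'B₁ hB₁B, fun _ =>
        ⟨W, Z, hWlc.1, hZ, hWlc, hB', ax.sle_trans W W' U hWlc.1 hW' hU hWW' hW'U, hZU⟩⟩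
    · exact ⟨B, ax.cle_refl B, fun h => absurd h hU⟩
  choose F hF1 hF2 using step
  let f : ℕ → M := fun n => Nat.rec A (fun k B => F B (e k)) n
  have hfs : ∀ n, f (n + 1) = F (f n) (e n) := fun n => rfl
  have hstep : ∀ n, cle c (f (n + 1)) (f n) := fun n => hF1 (f n) (e n)
  have hchain : ∀ n m, n ≤ m → cle c (f m) (f n) := by
    intro n m h
    induction m, h using Nat.le_induction with
    | base => exact ax.cle_refl (f n)
    | succ m hm ih => exact ax.cle_trans _ _ _ (hstep m) ih
  refine ⟨{G | ∃ n, cle c (f n) G}, ⟨?_, ?_, ?_, ?_⟩, ⟨0, ax.cle_refl A⟩⟩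
  · rintro G ⟨n, h⟩ G' hGG'
    exact ⟨n, ax.cle_trans _ _ _ h hGG'⟩
  · rintro G₁ ⟨n₁, h₁⟩ G₂ ⟨n₂, h₂⟩
    exact ⟨f (max n₁ n₂), ⟨max n₁ n₂, ax.cle_refl _⟩,
      ax.cle_trans _ _ _ (hchain n₁ _ (le_max_left n₁ n₂)) h₁,
      ax.cle_trans _ _ _ (hchain n₂ _ (le_max_right n₁ n₂)) h₂⟩
  · intro U hU
    obtain ⟨n, rfl⟩ := he U
    obtain ⟨W, Z, hWs, hZs, hWlc, hZrc, hWU, hZU⟩ := hF2 (f n) (e n) hU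
    rw [← hfs n] at hWlc
    obtain ⟨A', hA'lc, h⟩ := ax.lc_up W (e n) (f (n + 1)) hWs hU hWU hWlc
    exact ⟨A', ⟨n + 1, h⟩, hA'lc⟩
  · intro U hU
    obtain ⟨n, rfl⟩ := he U
    obtain ⟨W, Z, hWs, hZs, hWlc, hZrc, hWU, hZU⟩ := hF2 (f n) (e n) hU
    rw [← hfs n] at hZrc
    obtain ⟨A', hA'rc, h⟩ := ax.rc_up Z (e n) (f (n + 1)) hZs hU hZU hZrc
    exact ⟨A', ⟨n + 1, h⟩, hA'rc⟩

lemma act_ex (ax : Axioms c) {u : Set M} (hu : FullFilter c u) (E V : M)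
    (hE : LC c V E) : ∃ F, LC c V F ∧ ∃ T, T ∈ u ∧ c.rel T E F := by
  obtain ⟨α, hα⟩ := ax.exists_rc E
  obtain ⟨T, hTu, hT⟩ := hu.lc_mem α hα.1
  obtain ⟨β, hβ⟩ := ax.exists_rc T
  obtain ⟨Fq, -, hFlc, hFrel, -⟩ := ax.prod_exists β α V T E hβ hT hα hE
  exact ⟨Fq, hFlc, T, hTu, hFrel⟩

lemma act_uniq (ax : Axioms c) {u : Set M} (hu : FullFilter c u)
    {E E₀ F₁ F₂ V S₁ S₂ : M} (hE₀ : cle c E₀ E) (hS₁ : S₁ ∈ u) (hS₂ : S₂ ∈ u)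
    (h₁ : c.rel S₁ E F₁) (h₂ : c.rel S₂ E₀ F₂) (hF₁ : LC c V F₁) (hF₂ : LC c V F₂) :
    F₁ = F₂ := by
  obtain ⟨S₀, hS₀u, g₁, g₂⟩ := hu.directed S₁ hS₁ S₂ hS₂
  have r₁ : c.rel S₀ E₀ F₁ := ax.mono _ _ _ _ _ h₁ g₁ hE₀
  have r₂ : c.rel S₀ E₀ F₂ := ax.mono _ _ _ _ _ h₂ g₂ (ax.cle_refl E₀)
  obtain ⟨P, hP₁, hP₂⟩ := exists_lb_of_rel ax r₁ r₂
  exact lc_eq_of_lb ax hF₁ hF₂ hP₁ hP₂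

lemma act_comp (ax : Axioms c) (nax : NegAx c) [Countable M] (hassoc : FAssoc c)
    {u v : Set M} (hu : FullFilter c u) (hv : FullFilter c v) {S₁ S₂ E F G : M}
    (hS₁ : S₁ ∈ u) (hS₂ : S₂ ∈ v) (h₁ : c.rel S₁ E F) (h₂ : c.rel S₂ F G) :
    ∃ E₀, cle c E₀ E ∧ ∃ S₃, S₃ ∈ fprod c v u ∧ c.rel S₃ E₀ G := by
  obtain ⟨ls₂, hls₂⟩ := ax.exists_lc S₂
  obtain ⟨rs₁, hrs₁⟩ := ax.exists_rc S₁
  obtain ⟨b₀, hb₀, hb₀l, hb₀r, -⟩ := ax.meet ls₂ rs₁ hls₂.1 hrs₁.1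
  obtain ⟨T₂', hT₂'v, hT₂'lc, hT₂'S₂⟩ := lc_refine ax hv hS₂ hls₂ hb₀ hb₀l
  obtain ⟨T₁', hT₁'u, hT₁'rc, hT₁'S₁⟩ := rc_refine ax hu hS₁ hrs₁ hb₀ hb₀r
  obtain ⟨lt₁, hlt₁⟩ := ax.exists_lc T₁'
  obtain ⟨rE, hrE⟩ := ax.exists_rc E
  obtain ⟨g₀, hg₀, hg₀l, hg₀r, -⟩ := ax.meet lt₁ rE hlt₁.1 hrE.1
  obtain ⟨T₁'', hT₁''u, hT₁''lc, hT₁''T₁'⟩ := lc_refine ax hu hT₁'u hlt₁ hg₀ hg₀l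
  obtain ⟨b₁, hb₁⟩ := ax.exists_rc T₁''
  have hb₁b₀ : sle c b₁ b₀ := rcsub_mono ax hT₁'rc hb₁ hT₁''T₁'
  obtain ⟨T₂'', hT₂''v, hT₂''lc, hT₂''T₂'⟩ := lc_refine ax hv hT₂'v hT₂'lc hb₁.1 hb₁b₀
  obtain ⟨E₀, hE₀rc, hE₀E⟩ := (ax.rc_sub_iff g₀ rE E hg₀ hrE.1 hrE).mp hg₀r
  obtain ⟨a, ha⟩ := ax.exists_rc T₂''
  obtain ⟨h, hh⟩ := ax.exists_lc E₀
  obtain ⟨P₂₁, hP₂₁rc, hP₂₁lc, hP₂₁rel, hP₂₁min⟩ :=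
    ax.prod_exists a b₁ g₀ T₂'' T₁'' ha hT₂''lc hb₁ hT₁''lc
  obtain ⟨P₁₀, hP₁₀rc, hP₁₀lc, hP₁₀rel, hP₁₀min⟩ :=
    ax.prod_exists b₁ g₀ h T₁'' E₀ hb₁ hT₁''lc hE₀rc hh
  obtain ⟨G₁, hG₁rc, hG₁lc, hG₁rel, hG₁min⟩ :=
    ax.prod_exists a g₀ h P₂₁ E₀ hP₂₁rc hP₂₁lc hE₀rc hh
  obtain ⟨G₂, hG₂rc, hG₂lc, hG₂rel, hG₂min⟩ :=
    ax.prod_exists a b₁ h T₂'' P₁₀ ha hT₂''lc hP₁₀rc hP₁₀lc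
  obtain ⟨w, hw, hE₀w⟩ := exists_ff ax E₀
  have q_eq := hassoc v u w hv hu hw
  have hG₁q : G₁ ∈ fprod c (fprod c v u) w :=
    ⟨P₂₁, ⟨T₂'', hT₂''v, T₁'', hT₁''u, hP₂₁rel⟩, E₀, hE₀w, hG₁rel⟩
  have hG₂q : G₂ ∈ fprod c (fprod c v u) w := by
    rw [q_eq]
    exact ⟨T₂'', hT₂''v, P₁₀, ⟨T₁'', hT₁''u, E₀, hE₀w, hP₁₀rel⟩, hG₂rel⟩
  have hq : FullFilter c (fprod c (fprod c v u) w) :=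
    prod_full ax nax (prod_full ax nax hv hu) hw
  obtain ⟨Q, hQ, hQ₁, hQ₂⟩ := hq.directed G₁ hG₁q G₂ hG₂q
  have hG₁₂ : G₁ = G₂ := lc_eq_of_lb ax hG₁lc hG₂lc hQ₁ hQ₂
  have hT₂''S₂ : cle c T₂'' S₂ := ax.cle_trans _ _ _ hT₂''T₂' hT₂'S₂
  have hT₁''S₁ : cle c T₁'' S₁ := ax.cle_trans _ _ _ hT₁''T₁' hT₁'S₁
  have hP₁₀F : cle c P₁₀ F := hP₁₀min F (ax.mono _ _ _ _ _ h₁ hT₁''S₁ hE₀E)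
  have hrelG : c.rel T₂'' P₁₀ G := ax.mono _ _ _ _ _ h₂ hT₂''S₂ hP₁₀F
  have hG₁G : cle c G₁ G := by rw [hG₁₂]; exact hG₂min G hrelG
  exact ⟨E₀, hE₀E, P₂₁, ⟨T₂'', hT₂''v, T₁'', hT₁''u, hP₂₁rel⟩, up3 ax nax hG₁rel hG₁G⟩

end Aux

/-- `x·Ĉ = D̂` where `D = x·C` is given by the action. -/
theorem stmt11 (c : CG M) [Countable M] (ax : Axioms c) (nax : NegAx c) (hassoc : FAssoc c)
    (x : Set M) (hx : FullFilter c x) (V C D : M) (hV : IsSub c V)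
    (hC : LC c V C) (hD : LC c V D) (hact : act c x C D) :
    {z | ∃ y : Set M, FullFilter c y ∧ C ∈ y ∧ z = fprod c x y} = hatS c D := by
  ext z
  constructor
  · rintro ⟨y, hy, hCy, rfl⟩
    obtain ⟨S, hSx, hSrel⟩ := hact
    exact ⟨prod_full ax nax hx hy, S, hSx, C, hCy, hSrel⟩
  · rintro ⟨hz, hDz⟩
    have hfinv : FullFilter c (finv c x) := finv_full ax hx
    have hy : FullFilter c (fprod c (finv c x) z) := prod_full ax nax hfinv hz
    have hxy : fprod c x (fprod c (finv c x) z) = z := by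
      calc fprod c x (fprod c (finv c x) z)
          = fprod c (fprod c x (finv c x)) z := (hassoc x (finv c x) z hx hfinv hz).symm
        _ = fprod c (fone c) z := by rw [prod_finv_right ax nax hx]
        _ = z := fone_prod ax nax hz
    obtain ⟨C', hC'y, hC'lc⟩ := hy.lc_mem V hV
    obtain ⟨D₀, hD₀lc, Ss, hSsx, hSsrel⟩ := act_ex ax hx C' V hC'lc
    have hD₀z : D₀ ∈ z := by
      rw [← hxy]
      exact ⟨Ss, hSsx, C', hC'y, hSsrel⟩
    obtain ⟨GG, hGG, k₁, k₂⟩ := hz.directed D hDz D₀ hD₀z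
    have hDD₀ : D = D₀ := lc_eq_of_lb ax hD hD₀lc k₁ k₂
    obtain ⟨C'', hC''lc, T, hTinv, hTrel⟩ := act_ex ax hfinv D V hD
    obtain ⟨S, hSx, hSrel⟩ := hact
    obtain ⟨C₀, hC₀C, S₃, hS₃, hS₃rel⟩ :=
      act_comp ax nax hassoc hx hfinv hSx hTinv hSrel hTrel
    rw [prod_finv_left ax nax hx] at hS₃
    obtain ⟨UC, hUC⟩ := ax.exists_rc C
    have hCC'' : C = C'' :=
      act_uniq ax (fone_full ax nax) hC₀C ⟨UC, hUC.1, ax.cle_refl UC⟩ hS₃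
        hUC.2.1 hS₃rel hC hC''lc
    have hSsrel' : c.rel Ss C' D := by rw [hDD₀]; exact hSsrel
    obtain ⟨C₀', hC₀'C', S₃', hS₃', hS₃'rel⟩ :=
      act_comp ax nax hassoc hx hfinv hSsx hTinv hSsrel' hTrel
    rw [prod_finv_left ax nax hx] at hS₃'
    obtain ⟨UC', hUC'⟩ := ax.exists_rc C'
    have hC'C'' : C' = C'' :=
      act_uniq ax (fone_full ax nax) hC₀'C' ⟨UC', hUC'.1, ax.cle_refl UC'⟩ hS₃'
        hUC'.2.1 hS₃'rel hC'lc hC''lc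
    have hCy : C ∈ fprod c (finv c x) z := by
      rw [hCC''.trans hC'C''.symm]
      exact hC'y
    exact ⟨fprod c (finv c x) z, hy, hCy, hxy.symm⟩

end CoarsePaper
end

section
/- Let M be a countable coarse group satisfying the negative-expression axiom and such that the product of full filters is associative. Then for all A, B, C ∈ M: the set Â·B̂ ∩ Ĉ is empty if and only if there are no D ⊑ A and E ⊑ B with DE ⊑ C, where Â·B̂ = {x·y : x ∈ Â, y ∈ B̂}. -/
/-! Abstract coarse groups (Nies–Schlicht–Tent). -/

namespace CoarsePaper

variable {M : Type}

/-- One step of the filter construction: below any `D` we can find `D'` such that the upward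
closure of `D'` contains a left and a right *coset of a given *subgroup `U`. -/
lemma step_exists (c : CG M) (ax : Axioms c) (D U : M) :
    ∃ D', cle c D' D ∧ (IsSub c U →
      (∃ A, LC c U A ∧ cle c D' A) ∧ (∃ A, RC c U A ∧ cle c D' A)) := by
  by_cases hU : IsSub c U
  · -- left coset step
    obtain ⟨V, hV⟩ := ax.exists_lc D
    obtain ⟨W, hW, hWV, hWU, -⟩ := ax.meet V U hV.1 hU
    obtain ⟨A', hA'⟩ := (ax.lc_sub_iff W V D hW hV.1 hV).mp hWV
    obtain ⟨AL, hAL, hA'AL⟩ := ax.lc_up W U A' hW hU hWU hA'.1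
    -- right coset step, below A'
    obtain ⟨V₂, hV₂⟩ := ax.exists_rc A'
    obtain ⟨W₂, hW₂, hWV₂, hWU₂, -⟩ := ax.meet V₂ U hV₂.1 hU
    obtain ⟨D', hD'⟩ := (ax.rc_sub_iff W₂ V₂ A' hW₂ hV₂.1 hV₂).mp hWV₂
    obtain ⟨AR, hAR, hD'AR⟩ := ax.rc_up W₂ U D' hW₂ hU hWU₂ hD'.1
    refine ⟨D', ax.cle_trans _ _ _ hD'.2 hA'.2, fun _ => ⟨⟨AL, hAL, ?_⟩, ⟨AR, hAR, hD'AR⟩⟩⟩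
    exact ax.cle_trans _ _ _ hD'.2 hA'AL
  · exact ⟨D, ax.cle_refl D, fun h => absurd h hU⟩

/-- Every element of a countable coarse group belongs to some full filter. -/
lemma exists_fullFilter (c : CG M) [Countable M] (ax : Axioms c) (D : M) :
    ∃ x : Set M, FullFilter c x ∧ D ∈ x := by
  have : Nonempty M := ⟨D⟩
  obtain ⟨f, hf⟩ := exists_surjective_nat M
  choose step hstep1 hstep2 using step_exists c ax
  let g : ℕ → M := fun n => Nat.rec D (fun n Dn => step Dn (f n)) n
  have hg0 : g 0 = D := rfl
  have hgs : ∀ n, g (n + 1) = step (g n) (f n) := fun n => rfl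
  have hdec : ∀ n, cle c (g (n + 1)) (g n) := fun n => hstep1 (g n) (f n)
  have hmono : ∀ m n, n ≤ m → cle c (g m) (g n) := by
    intro m
    induction m with
    | zero => intro n hn; simp_all [ax.cle_refl]
    | succ m ih =>
      intro n hn
      rcases Nat.lt_or_ge n (m + 1) with h | h
      · exact ax.cle_trans _ _ _ (hdec m) (ih n (Nat.lt_succ_iff.mp h))
      · have : n = m + 1 := le_antisymm hn h
        subst this; exact ax.cle_refl _
  refine ⟨{B | ∃ n, cle c (g n) B}, ⟨?_, ?_, ?_, ?_⟩, ⟨0, ax.cle_refl D⟩⟩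
  · rintro P ⟨n, hn⟩ Q hPQ
    exact ⟨n, ax.cle_trans _ _ _ hn hPQ⟩
  · rintro P ⟨n, hn⟩ Q ⟨m, hm⟩
    refine ⟨g (max n m), ⟨max n m, ax.cle_refl _⟩, ?_, ?_⟩
    · exact ax.cle_trans _ _ _ (hmono _ _ (le_max_left n m)) hn
    · exact ax.cle_trans _ _ _ (hmono _ _ (le_max_right n m)) hm
  · intro U hU
    obtain ⟨n, rfl⟩ := hf U
    obtain ⟨⟨A, hA, hgA⟩, -⟩ := hstep2 (g n) (f n) hU
    exact ⟨A, ⟨n + 1, by rw [hgs]; exact hgA⟩, hA⟩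
  · intro U hU
    obtain ⟨n, rfl⟩ := hf U
    obtain ⟨-, ⟨A, hA, hgA⟩⟩ := hstep2 (g n) (f n) hU
    exact ⟨A, ⟨n + 1, by rw [hgs]; exact hgA⟩, hA⟩

/-- `Â·B̂ ∩ Ĉ = ∅` iff there are no `D ⊑ A`, `E ⊑ B` with `DE ⊑ C`. -/
theorem stmt13 (c : CG M) [Countable M] (ax : Axioms c) (nax : NegAx c) (hassoc : FAssoc c)
    (A B C : M) :
    (∀ x y : Set M, FullFilter c x → FullFilter c y → A ∈ x → B ∈ y → C ∉ fprod c x y) ↔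
    ¬ ∃ D E, cle c D A ∧ cle c E B ∧ c.rel D E C := by
  constructor
  · rintro h ⟨D, E, hDA, hEB, hDE⟩
    obtain ⟨x, hx, hDx⟩ := exists_fullFilter c ax D
    obtain ⟨y, hy, hEy⟩ := exists_fullFilter c ax E
    exact h x y hx hy (hx.up D hDx A hDA) (hy.up E hEy B hEB) ⟨D, hDx, E, hEy, hDE⟩
  · rintro h x y hx hy hAx hBy ⟨A', hA', B', hB', hrel⟩
    obtain ⟨D, hDx, hDA, hDA'⟩ := hx.directed A hAx A' hA'
    obtain ⟨E, hEy, hEB, hEB'⟩ := hy.directed B hBy B' hB'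
    exact h ⟨D, E, hDA, hEB, ax.mono D E A' B' C hrel hDA' hEB'⟩

end CoarsePaper
end

section
/- Let G be an oligomorphic closed subgroup of S∞. Then there is an open subgroup W of G such that the left translation action of G on the set of left cosets of W is faithful and oligomorphic (for each n ≥ 1, the diagonal action of G on n-tuples of left cosets of W has only finitely many orbits); moreover, for any bijective enumeration of the left cosets of W by ℕ, the resulting homomorphism Θ : G → S∞ induced by this action is a topological group embedding, i.e. Θ is injective, continuous, and a homeomorphism onto its image. -/
/-!
Since `G` has finitely many orbits on `ℕ`, pick a representative `b i` of each orbit and let `W`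
be the pointwise stabilizer of these finitely many points, an open subgroup. The coset `gW` is
determined by the tuple `g ∘ b`, so `G ⧸ W` embeds `G`-equivariantly into `ℕ^ι`; hence `n`-tuples
of cosets embed into `ℕ^(n × ι)` and there are finitely many orbits on them. Every point of `ℕ`
is some `k (b i)`, and `g (k (b i))` can be read off the coset `gkW`; this gives faithfulness and
shows that the topology of `G` is induced by its action on the (discrete) cosets.
-/

/-- `S∞`: the group of permutations of `ℕ` with the topology of pointwise convergence,
induced by `σ ↦ (σ, σ⁻¹)` from the product topology on `(ℕ → ℕ) × (ℕ → ℕ)`. -/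
instance permTop : TopologicalSpace (Equiv.Perm ℕ) :=
  TopologicalSpace.induced (fun σ => ((⇑σ, ⇑σ.symm) : (ℕ → ℕ) × (ℕ → ℕ))) inferInstance

open Function MulAction Topology Equiv

def IsOligomorphic (M α : Type*) [Group M] [MulAction M α] : Prop :=
  ∀ n : ℕ, Finite (orbitRel.Quotient M (Fin n → α))

section Orbits

variable {M β γ : Type*} [Group M] [MulAction M β] [MulAction M γ]

theorem finite_orbitRel_quotient_iff_exists_finset :
    Finite (orbitRel.Quotient M β) ↔ ∃ T : Finset β, ∀ x : β, ∃ t ∈ T, ∃ g : M, g • x = t := by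
  classical
  constructor
  · intro _
    have := Fintype.ofFinite (orbitRel.Quotient M β)
    exact ⟨Finset.univ.image Quotient.out, fun x =>
      ⟨_, Finset.mem_image_of_mem _ (Finset.mem_univ ⟦x⟧), Quotient.mk_out (s := orbitRel M β) x⟩⟩
  · rintro ⟨T, hT⟩
    refine Finite.of_surjective (fun t : T => (⟦t⟧ : orbitRel.Quotient M β)) ?_
    rintro ⟨x⟩
    obtain ⟨t, ht, g, rfl⟩ := hT x
    exact ⟨⟨_, ht⟩, orbitRel.Quotient.quotient_smul_eq⟩

theorem finite_orbitRel_quotient_of_injective {f : β → γ} (hf : Injective f)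
    (hfM : ∀ (g : M) x, f (g • x) = g • f x) [Finite (orbitRel.Quotient M γ)] :
    Finite (orbitRel.Quotient M β) := by
  refine Finite.of_injective (β := orbitRel.Quotient M γ)
    (Quotient.map' f fun _ y ⟨g, hg⟩ => ⟨g, (hfM g y).symm.trans (congrArg f hg)⟩) ?_
  rintro ⟨x⟩ ⟨y⟩ h
  obtain ⟨g, hg⟩ := Quotient.exact h
  exact Quotient.sound ⟨g, hf (by rw [hfM]; exact hg)⟩

end Orbits

namespace IsOligomorphic

variable {M α : Type*} [Group M] [MulAction M α]

theorem finite_orbitRel_quotient_pi (h : IsOligomorphic M α) (κ : Type*) [Finite κ] :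
    Finite (orbitRel.Quotient M (κ → α)) := by
  obtain ⟨n, ⟨e⟩⟩ := Finite.exists_equiv_fin κ
  have := h n
  exact finite_orbitRel_quotient_of_injective (f := fun x : κ → α => x ∘ e.symm)
    e.symm.surjective.injective_comp_right fun _ _ => rfl

theorem finite_orbitRel_quotient (h : IsOligomorphic M α) : Finite (orbitRel.Quotient M α) := by
  have := h.finite_orbitRel_quotient_pi Unit
  exact finite_orbitRel_quotient_of_injective (f := fun x (_ : Unit) => x)
    (fun _ _ hxy => congrFun hxy ()) fun _ _ => rfl

theorem quotient_stabilizer (h : IsOligomorphic M α) {ι : Type*} [Finite ι] (b : ι → α) :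
    IsOligomorphic M (M ⧸ stabilizer M b) := fun n => by
  have := h.finite_orbitRel_quotient_pi (Fin n × ι)
  refine finite_orbitRel_quotient_of_injective
    (f := fun p (k : Fin n × ι) => ofQuotientStabilizer M b (p k.1) k.2) ?_ fun g p => ?_
  · intro p p' hpp'
    funext k
    exact injective_ofQuotientStabilizer M b (funext fun i => congrFun hpp' (k, i))
  · funext k
    simp [ofQuotientStabilizer_smul]

end IsOligomorphic

theorem faithfulSMul_quotient_stabilizer {M α ι : Type*} [Group M] [MulAction M α]
    [FaithfulSMul M α] {b : ι → α} (hb : ∀ x, ∃ i, x ∈ orbit M (b i)) :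
    FaithfulSMul M (M ⧸ stabilizer M b) where
  eq_of_smul_eq_smul {g g'} h := eq_of_smul_eq_smul fun x => by
    obtain ⟨i, k, rfl⟩ := hb x
    have := congrArg (ofQuotientStabilizer M b) (h (QuotientGroup.mk k))
    rw [ofQuotientStabilizer_smul, ofQuotientStabilizer_smul, ofQuotientStabilizer_mk] at this
    exact congrFun this i

/-- Since `σ⁻¹ x = y ↔ σ y = x`, the inverse contributes no new open sets to `permTop`. -/
theorem isInducing_coeFn_perm : IsInducing (fun σ : Perm ℕ => (σ : ℕ → ℕ)) := by
  have hpair : Continuous fun σ : Perm ℕ => ((σ, σ.symm) : (ℕ → ℕ) × (ℕ → ℕ)) :=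
    continuous_induced_dom
  refine ⟨le_antisymm (continuous_iff_le_induced.1 (continuous_fst.comp hpair)) ?_⟩
  let _ : TopologicalSpace (Perm ℕ) := .induced (fun σ : Perm ℕ => (σ : ℕ → ℕ)) inferInstance
  refine continuous_iff_le_induced.1 (continuous_induced_dom.prodMk
    (continuous_pi fun x => continuous_discrete_rng.2 fun y => ?_))
  have hpre : (fun σ : Perm ℕ => σ.symm x) ⁻¹' {y} =
      (fun σ : Perm ℕ => (σ : ℕ → ℕ)) ⁻¹' {f | f y = x} := by
    ext σ
    exact (symm_apply_eq σ).trans eq_comm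
  have hy : Continuous fun f : ℕ → ℕ => f y := continuous_apply y
  rw [hpre]
  exact isOpen_induced ((isOpen_discrete {x}).preimage hy)

theorem continuous_perm_iff {X : Type*} [TopologicalSpace X] {f : X → Perm ℕ} :
    Continuous f ↔ ∀ x y, IsOpen {p | f p x = y} := by
  rw [isInducing_coeFn_perm.continuous_iff, continuous_pi_iff]
  exact forall_congr' fun x => continuous_discrete_rng

theorem isInducing_of_forall_apply_eq_comp {X : Type*} [TopologicalSpace X] {f θ : X → Perm ℕ}
    (hf : IsInducing f) (hθ : Continuous θ)
    (h : ∀ x, ∃ n, ∃ φ : ℕ → ℕ, ∀ p, f p x = φ (θ p n)) : IsInducing θ := by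
  choose n φ hφ using h
  refine IsInducing.of_comp hθ (g := fun σ x => φ x (σ (n x))) ?_ ?_
  · exact continuous_pi fun x => continuous_of_discreteTopology.comp
      ((continuous_apply (n x)).comp isInducing_coeFn_perm.continuous)
  · convert isInducing_coeFn_perm.comp hf using 1
    funext p x
    exact (hφ x p).symm

section Subgroup

variable {G : Subgroup (Perm ℕ)} {ι : Type*} [Finite ι]

theorem isOpen_setOf_smul_eq (c d : ι → ℕ) : IsOpen {g : G | g • c = d} := by
  have : {g : G | g • c = d} = ⋂ i, {g : G | (g : Perm ℕ) (c i) = d i} := by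
    ext g
    simp [funext_iff, Subgroup.smul_def, Perm.smul_def]
  rw [this]
  exact isOpen_iInter_of_finite fun i => continuous_perm_iff.1 continuous_subtype_val (c i) (d i)

theorem isOpen_stabilizer (b : ι → ℕ) : IsOpen (stabilizer G b : Set G) :=
  isOpen_setOf_smul_eq b b

theorem isOpen_setOf_smul_quotient_eq (b : ι → ℕ) (q q' : G ⧸ stabilizer G b) :
    IsOpen {g : G | g • q = q'} := by
  have : {g : G | g • q = q'} =
      {g : G | g • ofQuotientStabilizer G b q = ofQuotientStabilizer G b q'} := by
    ext g
    simp only [Set.mem_ofPred_eq, ← ofQuotientStabilizer_smul,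
      (injective_ofQuotientStabilizer G b).eq_iff]
  rw [this]
  exact isOpen_setOf_smul_eq _ _

theorem isEmbedding_permCongr_toPerm {b : ι → ℕ} (hb : ∀ x, ∃ i, x ∈ orbit G (b i))
    (e : G ⧸ stabilizer G b ≃ ℕ) : IsEmbedding fun g : G => e.permCongr (toPerm g) := by
  have := faithfulSMul_quotient_stabilizer hb
  have hcont : Continuous fun g : G => e.permCongr (toPerm g) :=
    continuous_perm_iff.2 fun x y => by
      simpa only [permCongr_apply, toPerm_apply, ← e.eq_symm_apply] using
        isOpen_setOf_smul_quotient_eq b (e.symm x) (e.symm y)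
  refine ⟨isInducing_of_forall_apply_eq_comp IsInducing.subtypeVal hcont fun x => ?_,
    e.permCongr.injective.comp toPerm_injective⟩
  obtain ⟨i, k, rfl⟩ := hb x
  refine ⟨e (QuotientGroup.mk k), fun m => ofQuotientStabilizer G b (e.symm m) i, fun g => ?_⟩
  simp [ofQuotientStabilizer_mk, mul_smul, Subgroup.smul_def, Perm.smul_def]

end Subgroup

theorem stmt16_general (G : Subgroup (Equiv.Perm ℕ))
    (holig : ∀ n : ℕ, 1 ≤ n → ∃ T : Finset (Fin n → ℕ), ∀ x : Fin n → ℕ,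
      ∃ y ∈ T, ∃ g ∈ G, ∀ i, g (x i) = y i) :
    ∃ W : Subgroup G, IsOpen (W : Set G) ∧
      (∀ g : G, (∀ q : G ⧸ W, g • q = q) → g = 1) ∧
      (∀ n : ℕ, 1 ≤ n → ∃ T : Finset (Fin n → G ⧸ W), ∀ f : Fin n → G ⧸ W,
        ∃ t ∈ T, ∃ g : G, ∀ i, g • f i = t i) ∧
      (∀ e : G ⧸ W ≃ ℕ,
        Function.Injective (fun g : G => (e.symm.trans (MulAction.toPerm g)).trans e) ∧
        Continuous (fun g : G => (e.symm.trans (MulAction.toPerm g)).trans e) ∧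
        Topology.IsEmbedding (fun g : G => (e.symm.trans (MulAction.toPerm g)).trans e)) := by
  have hG : IsOligomorphic G ℕ := by
    intro n
    rcases Nat.eq_zero_or_pos n with rfl | hn
    · infer_instance
    obtain ⟨T, hT⟩ := holig n hn
    refine finite_orbitRel_quotient_iff_exists_finset.2 ⟨T, fun x => ?_⟩
    obtain ⟨y, hy, g, hg, hgx⟩ := hT x
    exact ⟨y, hy, ⟨g, hg⟩, funext hgx⟩
  have := hG.finite_orbitRel_quotient
  let b : orbitRel.Quotient G ℕ → ℕ := Quotient.out
  have hb : ∀ x, ∃ i, x ∈ orbit G (b i) := fun x =>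
    ⟨⟦x⟧, mem_orbit_symm.1 (Quotient.mk_out (s := orbitRel G ℕ) x)⟩
  have := faithfulSMul_quotient_stabilizer hb
  refine ⟨stabilizer G b, isOpen_stabilizer b,
    fun g hg => eq_of_smul_eq_smul fun q => by rw [hg, one_smul], fun n _ => ?_, fun e => ?_⟩
  · obtain ⟨T, hT⟩ := finite_orbitRel_quotient_iff_exists_finset.1 (hG.quotient_stabilizer b n)
    exact ⟨T, fun f => let ⟨t, ht, g, hgf⟩ := hT f; ⟨t, ht, g, congrFun hgf⟩⟩
  · have hΘ := isEmbedding_permCongr_toPerm hb e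
    exact ⟨hΘ.injective, hΘ.continuous, hΘ⟩

/-- an oligomorphic closed subgroup `G ≤ S∞` has an open subgroup `W` such
that the left translation action of `G` on `G ⧸ W` is faithful and oligomorphic, and any
bijective enumeration of `G ⧸ W` by `ℕ` turns this action into a topological embedding
`G → S∞`. -/
theorem stmt16 (G : Subgroup (Equiv.Perm ℕ)) (hclosed : IsClosed (G : Set (Equiv.Perm ℕ)))
    (holig : ∀ n : ℕ, 1 ≤ n → ∃ T : Finset (Fin n → ℕ), ∀ x : Fin n → ℕ,
      ∃ y ∈ T, ∃ g ∈ G, ∀ i, g (x i) = y i) :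
    ∃ W : Subgroup G, IsOpen (W : Set G) ∧
      (∀ g : G, (∀ q : G ⧸ W, g • q = q) → g = 1) ∧
      (∀ n : ℕ, 1 ≤ n → ∃ T : Finset (Fin n → G ⧸ W), ∀ f : Fin n → G ⧸ W,
        ∃ t ∈ T, ∃ g : G, ∀ i, g • f i = t i) ∧
      (∀ e : G ⧸ W ≃ ℕ,
        Function.Injective (fun g : G => (e.symm.trans (MulAction.toPerm g)).trans e) ∧
        Continuous (fun g : G => (e.symm.trans (MulAction.toPerm g)).trans e) ∧
        Topology.IsEmbedding (fun g : G => (e.symm.trans (MulAction.toPerm g)).trans e)) :=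
  stmt16_general G holig
end

section
/- Let G and H be closed subgroups of S∞ and let α ∈ S∞. Then αGα⁻¹ = H if and only if for every n ≥ 1 and all tuples x, y ∈ ℕⁿ: x and y lie in the same orbit of the coordinatewise action of G on ℕⁿ if and only if α∘x and α∘y lie in the same orbit of the coordinatewise action of H on ℕⁿ. -/
/-!
A closed subgroup of `S∞` is determined by its orbits on finite tuples: a permutation `β` lies in
a closed set `S` as soon as, for every tuple `x`, some `σ ∈ S` agrees with `β` on `x`. Applying
this to the tuple `(0, …, n, β⁻¹ 0, …, β⁻¹ n)` makes `σ` agree with `β` and `β⁻¹` on `[0, n]`,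
i.e. `σ` lies in a basic neighbourhood of `β`. Hence if `α` transports `G`-orbits of tuples to
`H`-orbits and back, `α G α⁻¹ ⊆ H` and `α⁻¹ H α ⊆ G`; the converse is a direct computation.
-/

open Filter Topology

namespace Equiv.Perm

theorem mem_of_isClosed_of_forall_eqOn_Iic {S : Set (Perm ℕ)} (hS : IsClosed S) {β : Perm ℕ}
    (h : ∀ n, ∃ σ ∈ S, Set.EqOn σ β (Set.Iic n) ∧ Set.EqOn σ.symm β.symm (Set.Iic n)) :
    β ∈ S := by
  choose σ hσS hσ hσsymm using h
  refine hS.mem_of_tendsto ?_ (Eventually.of_forall (f := atTop) hσS)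
  rw [nhds_induced, tendsto_comap_iff, nhds_prod_eq]
  refine .prodMk (tendsto_pi_nhds.2 fun k => ?_) (tendsto_pi_nhds.2 fun k => ?_)
  · exact tendsto_nhds_of_eventually_eq
      ((eventually_ge_atTop k).mono fun n hn => hσ n (Set.mem_Iic.2 hn))
  · exact tendsto_nhds_of_eventually_eq
      ((eventually_ge_atTop k).mono fun n hn => hσsymm n (Set.mem_Iic.2 hn))

theorem mem_of_isClosed_of_forall_tuple {S : Set (Perm ℕ)} (hS : IsClosed S) {β : Perm ℕ}
    (h : ∀ n, 1 ≤ n → ∀ x : Fin n → ℕ, ∃ σ ∈ S, ∀ i, σ (x i) = β (x i)) : β ∈ S := by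
  refine mem_of_isClosed_of_forall_eqOn_Iic hS fun n => ?_
  let x : Fin (n + 1 + (n + 1)) → ℕ :=
    Fin.append (fun i : Fin (n + 1) => (i : ℕ)) (fun i : Fin (n + 1) => β.symm i)
  obtain ⟨σ, hσS, hσ⟩ := h _ (by omega) x
  refine ⟨σ, hσS, fun k hk => ?_, fun k hk => ?_⟩
  · simpa only [x, Fin.append_left] using
      hσ (Fin.castAdd (n + 1) ⟨k, Nat.lt_succ_of_le hk⟩)
  · have : σ (β.symm k) = k := by
      simpa only [x, Fin.append_right, apply_symm_apply] using
        hσ (Fin.natAdd (n + 1) ⟨k, Nat.lt_succ_of_le hk⟩)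
    exact σ.symm_apply_eq.2 this.symm

theorem exists_mem_apply_eq_iff_of_conj {G H : Subgroup (Perm ℕ)} {α : Perm ℕ}
    (hconj : ∀ g, g ∈ G ↔ α * g * α⁻¹ ∈ H) {n : ℕ} (x y : Fin n → ℕ) :
    (∃ g ∈ G, ∀ i, g (x i) = y i) ↔ ∃ h ∈ H, ∀ i, h (α (x i)) = α (y i) := by
  constructor
  · rintro ⟨g, hg, hgxy⟩
    exact ⟨α * g * α⁻¹, (hconj g).1 hg, fun i => by simp [hgxy i]⟩
  · rintro ⟨h, hh, hhxy⟩
    refine ⟨α⁻¹ * h * α, (hconj _).2 (by simpa [mul_assoc] using hh), fun i => ?_⟩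
    simp [hhxy i]

end Equiv.Perm

/-- closed subgroups `G`, `H` of `S∞` are conjugate via `α` iff `α` is an
isomorphism of the orbit equivalence structures. -/
theorem stmt19 (G H : Subgroup (Equiv.Perm ℕ))
    (hG : IsClosed (G : Set (Equiv.Perm ℕ))) (hH : IsClosed (H : Set (Equiv.Perm ℕ)))
    (α : Equiv.Perm ℕ) :
    (∀ g : Equiv.Perm ℕ, g ∈ G ↔ α * g * α⁻¹ ∈ H) ↔
    (∀ n : ℕ, 1 ≤ n → ∀ x y : Fin n → ℕ,
      ((∃ g ∈ G, ∀ i, g (x i) = y i) ↔ (∃ h ∈ H, ∀ i, h (α (x i)) = α (y i)))) := by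
  refine ⟨fun hconj n _ => Equiv.Perm.exists_mem_apply_eq_iff_of_conj hconj,
    fun horb g => ⟨fun hg => ?_, fun hg => ?_⟩⟩
  · refine Equiv.Perm.mem_of_isClosed_of_forall_tuple hH fun n hn x => ?_
    obtain ⟨h, hh, hgx⟩ :=
      (horb n hn (fun i => α⁻¹ (x i)) fun i => g (α⁻¹ (x i))).1 ⟨g, hg, fun _ => rfl⟩
    exact ⟨h, hh, fun i => by simpa using hgx i⟩
  · refine Equiv.Perm.mem_of_isClosed_of_forall_tuple hG fun n hn x => ?_
    exact (horb n hn x fun i => g (x i)).2 ⟨α * g * α⁻¹, hg, fun i => by simp⟩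
end
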